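/- Let C ⊆ F_{q^m}^n be almost affine and fix x ∈ C. A subspace Y ≤ F_q^n is independent in the dual q-matroid M_C* if and only if there is no codeword c ∈ C \ {x} with supp(c − x) ≤ Y. Consequently, a subspace C' ≤ F_q^n is a circuit of M_C* if and only if C' = supp(c − x) for some x-minimal codeword c ∈ C \ {x}. -/

import Mathlib

open Submodule Module

variable (K L : Type) [Field K] [Fintype K] [Field L] [Fintype L] [Algebra K L]

/-- Orthogonal complement w.r.t. the standard dot product on `ι → K`. -/
def stdPerp {ι : Type} [Fintype ι] (V : Submodule K (ι → K)) : Submodule K (ι → K) where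
  carrier := {w | ∀ v ∈ V, ∑ j, v j * w j = 0}
  zero_mem' := by intro v hv; simp
  add_mem' := by
    intro a b ha hb v hv
    simp [Pi.add_apply, mul_add, Finset.sum_add_distrib, ha v hv, hb v hv]
  smul_mem' := by
    intro c a ha v hv
    simp only [Pi.smul_apply, smul_eq_mul, mul_left_comm]
    rw [← Finset.mul_sum, ha v hv, mul_zero]

/-- Extension of scalars: the `L`-span of a `K`-subspace of `ι → K` inside `ι → L`. -/
def extScalars {ι : Type} (W : Submodule K (ι → K)) : Submodule L (ι → L) :=
  Submodule.span L ((fun (w : ι → K) (j : ι) => algebraMap K L (w j)) '' (W : Set (ι → K)))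

/-- Image of the code `C` under the canonical projection `π_V`. -/
def projImage {ι : Type} [Fintype ι] (C : Set (ι → L)) (V : Submodule K (ι → K)) :
    Set ((ι → L) ⧸ extScalars K L (stdPerp K V)) :=
  Submodule.Quotient.mk '' C

/-- The rank function induced by a code: `ρ_C(V) = log_{q^m} |π_V(C)|`. -/
noncomputable def rho {ι : Type} [Fintype ι] (C : Set (ι → L)) (V : Submodule K (ι → K)) : ℕ :=
  Nat.log (Fintype.card L) (Nat.card (projImage K L C V))

/-- `C` is an almost affine rank-metric code. -/
def AlmostAffine {ι : Type} [Fintype ι] (C : Set (ι → L)) : Prop :=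
  ∀ V : Submodule K (ι → K), ∃ e : ℕ, Nat.card (projImage K L C V) = (Fintype.card L) ^ e

/-- Support of a vector `v ∈ L^ι` w.r.t. a `K`-basis `B` of `L`. -/
def supp {ι : Type} {m : ℕ} (B : Basis (Fin m) K L) (v : ι → L) : Submodule K (ι → K) :=
  Submodule.span K (Set.range fun i : Fin m => fun j : ι => B.repr (v j) i)

/-- The subcode `C(Z,x) = {c ∈ C : π_Z(c) = π_Z(x)}`. -/
def subcode {ι : Type} [Fintype ι] (C : Set (ι → L)) (Z : Submodule K (ι → K)) (x : ι → L) :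
    Set (ι → L) :=
  {c ∈ C | (Submodule.Quotient.mk (p := extScalars K L (stdPerp K Z)) c) =
      Submodule.Quotient.mk x}

/-- The `q`-matroid rank axioms (R1)–(R3). -/
def IsQMatroidRank {E : Type} [AddCommGroup E] [Module K E] (r : Submodule K E → ℕ) : Prop :=
  (∀ V : Submodule K E, r V ≤ finrank K V) ∧
  (∀ V W : Submodule K E, V ≤ W → r V ≤ r W) ∧
  (∀ V W : Submodule K E, r (V ⊔ W) + r (V ⊓ W) ≤ r V + r W)

/-! Independence of `Y` in `M_C*` amounts to `ρ_C(Y^⊥) = ρ_C(𝔽_q^n)`, i.e. to injectivity of the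
projection of `C` modulo the `L`-span `⟨Y⟩_L` of `Y`. Injectivity makes the fibre of `x` trivial.
Conversely, if that fibre is trivial, enlarge `Y` one vector at a time: passing from `p` to
`p ⊔ L ∙ z` merges at most `|L|` classes of an injective projection, while the class of `x`
stays a singleton, so the new image has more than `|C| / |L|` elements; both sizes being powers
of `|L|` by almost affinity, the new projection is still injective. Circuits, the minimal
dependent subspaces, are then the minimal supports. -/

theorem not_indep_and_forall_lt_indep_iff {α P : Type*} [PartialOrder P] {T : Set α} {s : α → P}
    {Indep : P → Prop} (h : ∀ Y, Indep Y ↔ ¬∃ c ∈ T, s c ≤ Y) (Z : P) :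
    (¬Indep Z ∧ ∀ Y < Z, Indep Y) ↔ ∃ c ∈ T, (¬∃ c' ∈ T, s c' < s c) ∧ s c = Z := by
  simp only [h, not_not]
  constructor
  · rintro ⟨⟨c, hc, hcZ⟩, hmin⟩
    have heq : s c = Z := hcZ.eq_of_not_lt fun hlt => hmin _ hlt ⟨c, hc, le_rfl⟩
    exact ⟨c, hc, fun ⟨c', hc', hlt⟩ => hmin _ (heq ▸ hlt) ⟨c', hc', le_rfl⟩, heq⟩
  · rintro ⟨c, hc, hmin, rfl⟩
    exact ⟨⟨c, hc, le_rfl⟩, fun Y hY ⟨c', hc', hle⟩ => hmin ⟨c', hc', hle.trans_lt hY⟩⟩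


section StdPerp

variable {K : Type} [Field K] {ι : Type} [Fintype ι]

theorem stdPerp_eq_orthogonal (V : Submodule K (ι → K)) :
    stdPerp K V = LinearMap.BilinForm.orthogonal (dotProductBilin K K) V :=
  rfl

theorem stdPerp_stdPerp (V : Submodule K (ι → K)) : stdPerp K (stdPerp K V) = V := by
  have hrefl : (dotProductBilin K K : LinearMap.BilinForm K (ι → K)).IsRefl :=
    fun v w h => by rwa [dotProductBilin_apply_apply, dotProduct_comm] at h
  have hnondeg : (dotProductBilin K K : LinearMap.BilinForm K (ι → K)).Nondegenerate :=
    ⟨fun v hv => dotProduct_eq_zero v hv,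
      fun w hw => dotProduct_eq_zero w fun v => by rw [dotProduct_comm]; exact hw v⟩
  rw [stdPerp_eq_orthogonal, stdPerp_eq_orthogonal]
  exact LinearMap.BilinForm.orthogonal_orthogonal hnondeg hrefl V

theorem stdPerp_bot : stdPerp K (⊥ : Submodule K (ι → K)) = ⊤ :=
  eq_top_iff.2 fun w _ v hv => by simp [(Submodule.mem_bot K).1 hv]

theorem stdPerp_top : stdPerp K (⊤ : Submodule K (ι → K)) = ⊥ := by
  rw [← stdPerp_bot, stdPerp_stdPerp]

end StdPerp

section ExtScalars

variable {K L : Type} [Field K] [Field L] [Algebra K L] {ι : Type}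

theorem extScalars_span (s : Set (ι → K)) :
    extScalars K L (span K s) = span L ((fun w j => algebraMap K L (w j)) '' s) := by
  have h : (fun w j => algebraMap K L (w j)) '' (span K s : Set (ι → K)) =
      span K ((fun w j => algebraMap K L (w j)) '' s) :=
    (Submodule.map_coe _ _).symm.trans
      (congrArg SetLike.coe (Submodule.map_span ((Algebra.linearMap K L).compLeft ι) s))
  rw [extScalars, h, Submodule.span_span_of_tower]

theorem extScalars_bot : extScalars K L (⊥ : Submodule K (ι → K)) = ⊥ := by
  rw [← Submodule.span_empty, extScalars_span, Set.image_empty, Submodule.span_empty]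

theorem extScalars_span_insert (v : ι → K) (s : Set (ι → K)) :
    extScalars K L (span K (insert v s)) =
      extScalars K L (span K s) ⊔ L ∙ fun j => algebraMap K L (v j) := by
  rw [extScalars_span, extScalars_span, Set.image_insert_eq, Submodule.span_insert, sup_comm]

theorem comp_mem_of_mem_extScalars {W : Submodule K (ι → K)} {v : ι → L}
    (hv : v ∈ extScalars K L W) (φ : L →ₗ[K] K) : φ ∘ v ∈ W := by
  induction hv using Submodule.span_induction generalizing φ with
  | mem _ hu =>
    obtain ⟨w, hw, rfl⟩ := hu
    convert W.smul_mem (φ 1) hw using 1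
    funext j
    simp [Algebra.algebraMap_eq_smul_one, mul_comm]
  | zero =>
    rw [show φ ∘ (0 : ι → L) = 0 from funext fun _ => map_zero φ]
    exact W.zero_mem
  | add u w _ _ hu hw =>
    rw [show φ ∘ (u + w) = φ ∘ u + φ ∘ w from funext fun _ => map_add φ _ _]
    exact W.add_mem (hu φ) (hw φ)
  | smul l u _ hu => exact hu (φ ∘ₗ LinearMap.mulLeft K l)

theorem supp_le_iff_mem_extScalars {m : ℕ} (B : Basis (Fin m) K L) {v : ι → L}
    {W : Submodule K (ι → K)} : supp K L B v ≤ W ↔ v ∈ extScalars K L W := by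
  rw [supp, Submodule.span_le, Set.range_subset_iff]
  refine ⟨fun h => ?_, fun hv i => comp_mem_of_mem_extScalars hv (B.coord i)⟩
  have hv : v = ∑ i, B i • fun j => algebraMap K L (B.repr (v j) i) := by
    funext j
    conv_lhs => rw [← B.sum_repr (v j)]
    simp [Algebra.smul_def, mul_comm]
  rw [hv]
  exact Submodule.sum_mem _ fun i _ => smul_mem _ _ (subset_span ⟨_, h i, rfl⟩)

end ExtScalars

section Counting

open Finset Classical

variable {L : Type} [Field L] [Fintype L] {E : Type} [AddCommGroup E] [Module L E]

theorem card_filter_mkQ_sup_span_singleton_le {C : Finset E}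
    {p : Submodule L E} (z c₀ : E) (hinj : Set.InjOn p.mkQ C) :
    #{c ∈ C | (p ⊔ L ∙ z).mkQ c = (p ⊔ L ∙ z).mkQ c₀} ≤ Fintype.card L := by
  have hmaps : ∀ c ∈ {c ∈ C | (p ⊔ L ∙ z).mkQ c = (p ⊔ L ∙ z).mkQ c₀},
      p.mkQ c ∈ univ.image fun l : L => p.mkQ c₀ + l • p.mkQ z := by
    intro c hc
    obtain ⟨a, ha, b, hb, hab⟩ :=
      Submodule.mem_sup.1 ((Submodule.Quotient.eq _).1 (mem_filter.1 hc).2)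
    obtain ⟨l, rfl⟩ := Submodule.mem_span_singleton.1 hb
    refine mem_image.2 ⟨l, mem_univ l, ?_⟩
    rw [← map_smul, ← map_add, Submodule.mkQ_apply, Submodule.mkQ_apply, Submodule.Quotient.eq]
    have hz : l • z = c - c₀ - a := by rw [← hab]; abel
    convert p.neg_mem ha using 1
    rw [hz]
    abel
  calc #{c ∈ C | (p ⊔ L ∙ z).mkQ c = (p ⊔ L ∙ z).mkQ c₀}
      ≤ #(univ.image fun l : L => p.mkQ c₀ + l • p.mkQ z) :=
        card_le_card_of_injOn _ hmaps (hinj.mono (filter_subset _ _))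
    _ ≤ Fintype.card L := card_image_le

theorem injOn_mkQ_sup_span_singleton {C : Finset E} {p : Submodule L E} {z x : E} (hx : x ∈ C)
    (hinj : Set.InjOn p.mkQ C) (hfib : ∀ c ∈ C, c - x ∈ p ⊔ L ∙ z → c = x)
    (ha : ∃ a, #(C.image p.mkQ) = Fintype.card L ^ a)
    (hb : ∃ b, #(C.image (p ⊔ L ∙ z).mkQ) = Fintype.card L ^ b) :
    Set.InjOn (p ⊔ L ∙ z).mkQ C := by
  set π := (p ⊔ L ∙ z).mkQ
  set q := Fintype.card L
  have hq : 1 < q := Fintype.one_lt_card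
  obtain ⟨a, ha⟩ := ha
  obtain ⟨b, hb⟩ := hb
  rw [card_image_of_injOn hinj] at ha
  have hmaps : ∀ c ∈ C.erase x, π c ∈ (C.image π).erase (π x) := fun c hc =>
    mem_erase.2 ⟨fun h => (mem_erase.1 hc).1 (hfib c (mem_erase.1 hc).2
      ((Submodule.Quotient.eq _).1 h)), mem_image_of_mem π (mem_erase.1 hc).2⟩
  have hcount : #(C.erase x) ≤ q * #((C.image π).erase (π x)) :=
    card_le_mul_card_image_of_maps_to hmaps q fun y hy => by
      obtain ⟨c₀, -, rfl⟩ := mem_image.1 (mem_erase.1 hy).2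
      exact (card_le_card (filter_subset_filter _ (erase_subset x C))).trans
        (card_filter_mkQ_sup_span_singleton_le z c₀ hinj)
  rw [card_erase_of_mem hx, card_erase_of_mem (mem_image_of_mem π hx), ha, hb] at hcount
  have hab : a ≤ b := by
    rw [← Nat.lt_succ_iff, ← Nat.pow_lt_pow_iff_right hq, pow_succ']
    have : q ≤ q * q ^ b := Nat.le_mul_of_pos_right q (Nat.pow_pos (by omega))
    rw [Nat.mul_sub_one] at hcount
    omega
  refine card_image_iff.1 (card_image_le.antisymm ?_)
  rw [ha, hb]
  exact Nat.pow_le_pow_right (by omega) hab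

end Counting

section AlmostAffine

open Finset Classical

variable {K L : Type} [Field K] [Field L] [Fintype L] [Algebra K L] {ι : Type}

theorem injOn_mkQ_extScalars [Finite ι] {C : Finset (ι → L)}
    (hC : ∀ W : Submodule K (ι → K),
      ∃ e, #(C.image (extScalars K L W).mkQ) = Fintype.card L ^ e)
    {x : ι → L} (hx : x ∈ C) {W : Submodule K (ι → K)}
    (hfib : ∀ c ∈ C, c - x ∈ extScalars K L W → c = x) :
    Set.InjOn (extScalars K L W).mkQ C := by
  obtain ⟨s, rfl⟩ : W.FG := IsNoetherian.noetherian W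
  induction s using Finset.induction_on with
  | empty =>
    rw [coe_empty, span_empty, extScalars_bot]
    exact (LinearMap.ker_eq_bot.1 (Submodule.ker_mkQ ⊥)).injOn
  | insert v s _ ih =>
    rw [coe_insert, extScalars_span_insert] at hfib ⊢
    refine injOn_mkQ_sup_span_singleton hx (ih fun c hc h => hfib c hc (mem_sup_left h)) hfib
      (hC _) ?_
    rw [← extScalars_span_insert]
    exact hC _

end AlmostAffine

section DualQMatroid

open Finset Classical

variable {K L : Type} [Field K] [Field L] [Algebra K L] {ι : Type} {S : Finset (ι → L)}

theorem natCard_projImage_coe [Fintype ι] (V : Submodule K (ι → K)) :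
    Nat.card (projImage K L (S : Set (ι → L)) V) =
      #(S.image (extScalars K L (stdPerp K V)).mkQ) := by
  rw [projImage, Nat.card_coe_set_eq, ← Set.ncard_coe_finset, coe_image]
  rfl

theorem card_image_mkQ_extScalars_bot :
    #(S.image (extScalars K L (⊥ : Submodule K (ι → K))).mkQ) = #S := by
  rw [extScalars_bot]
  exact card_image_of_injective _ (LinearMap.ker_eq_bot.1 (Submodule.ker_mkQ ⊥))

variable [Fintype L] [Fintype ι]

theorem AlmostAffine.card_image_mkQ_extScalars (hC : AlmostAffine K L (S : Set (ι → L)))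
    (W : Submodule K (ι → K)) :
    ∃ e, #(S.image (extScalars K L W).mkQ) = Fintype.card L ^ e := by
  have h := hC (stdPerp K W)
  rwa [natCard_projImage_coe, stdPerp_stdPerp] at h

theorem rho_stdPerp (Y : Submodule K (ι → K)) :
    rho K L (S : Set (ι → L)) (stdPerp K Y) =
      Nat.log (Fintype.card L) #(S.image (extScalars K L Y).mkQ) := by
  rw [rho, natCard_projImage_coe, stdPerp_stdPerp]

theorem rho_top : rho K L (S : Set (ι → L)) ⊤ = Nat.log (Fintype.card L) #S := by
  rw [← stdPerp_bot, rho_stdPerp, card_image_mkQ_extScalars_bot]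

theorem AlmostAffine.injOn_mkQ_extScalars_iff (hC : AlmostAffine K L (S : Set (ι → L)))
    {x : ι → L} (hx : x ∈ S) (Y : Submodule K (ι → K)) :
    Set.InjOn (extScalars K L Y).mkQ S ↔ ∀ c ∈ S, c - x ∈ extScalars K L Y → c = x :=
  ⟨fun hinj _ hc h => hinj hc hx ((Submodule.Quotient.eq _).2 h),
    injOn_mkQ_extScalars hC.card_image_mkQ_extScalars hx⟩

theorem AlmostAffine.dual_indep_iff_injOn (hC : AlmostAffine K L (S : Set (ι → L)))
    (Y : Submodule K (ι → K)) :
    finrank K Y + rho K L (S : Set (ι → L)) (stdPerp K Y) - rho K L (S : Set (ι → L)) ⊤ =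
      finrank K Y ↔ Set.InjOn (extScalars K L Y).mkQ S := by
  have hq : 1 < Fintype.card L := Fintype.one_lt_card
  rw [← card_image_iff, rho_stdPerp, rho_top]
  obtain ⟨e, he⟩ := hC.card_image_mkQ_extScalars Y
  obtain ⟨g, hg⟩ := hC.card_image_mkQ_extScalars (⊥ : Submodule K (ι → K))
  rw [card_image_mkQ_extScalars_bot] at hg
  have heg : e ≤ g := (Nat.pow_le_pow_iff_right hq).1 (he ▸ hg ▸ card_image_le)
  rw [he, hg, Nat.log_pow hq, Nat.log_pow hq, (Nat.pow_right_injective hq).eq_iff]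
  refine ⟨fun h => ?_, fun h => by omega⟩
  -- truncated subtraction: for `finrank K Y = 0` the equation holds whatever `e` is
  rcases Nat.eq_zero_or_pos (finrank K Y) with hY | hY
  · rw [Submodule.finrank_eq_zero.1 hY, card_image_mkQ_extScalars_bot] at he
    exact (Nat.pow_right_injective hq) (he.symm.trans hg)
  · omega

theorem AlmostAffine.dual_indep_iff {m : ℕ} (B : Basis (Fin m) K L)
    (hC : AlmostAffine K L (S : Set (ι → L))) {x : ι → L} (hx : x ∈ S)
    (Y : Submodule K (ι → K)) :
    finrank K Y + rho K L (S : Set (ι → L)) (stdPerp K Y) - rho K L (S : Set (ι → L)) ⊤ =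
      finrank K Y ↔ ¬∃ c ∈ (S : Set (ι → L)), c ≠ x ∧ supp K L B (c - x) ≤ Y := by
  rw [hC.dual_indep_iff_injOn, hC.injOn_mkQ_extScalars_iff hx]
  simp only [supp_le_iff_mem_extScalars B, Finset.mem_coe, not_exists, not_and, ne_eq,
    not_imp_not]

end DualQMatroid

theorem stmt_14_general {K L : Type} [Field K] [Field L] [Fintype L] [Algebra K L]
    {m n : ℕ} (B : Basis (Fin m) K L) (C : Set (Fin n → L)) (hC : AlmostAffine K L C)
    (x : Fin n → L) (hx : x ∈ C) :
    (∀ Y : Submodule K (Fin n → K),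
      (finrank K Y + rho K L C (stdPerp K Y) - rho K L C ⊤ = finrank K Y) ↔
        ¬ ∃ c ∈ C, c ≠ x ∧ supp K L B (c - x) ≤ Y) ∧
    (∀ C' : Submodule K (Fin n → K),
      ((¬ (finrank K C' + rho K L C (stdPerp K C') - rho K L C ⊤ = finrank K C')) ∧
        ∀ Y : Submodule K (Fin n → K), Y < C' →
          finrank K Y + rho K L C (stdPerp K Y) - rho K L C ⊤ = finrank K Y) ↔
        ∃ c ∈ C, c ≠ x ∧
          (¬ ∃ c' ∈ C, c' ≠ x ∧ supp K L B (c' - x) < supp K L B (c - x)) ∧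
          supp K L B (c - x) = C') := by
  obtain ⟨S, rfl⟩ := C.toFinite.exists_finset_coe
  have hindep := hC.dual_indep_iff B hx
  refine ⟨hindep, fun C' => ?_⟩
  simpa only [Set.mem_ofPred_eq, and_assoc] using
    not_indep_and_forall_lt_indep_iff (T := {c | c ∈ (S : Set (Fin n → L)) ∧ c ≠ x})
      (s := fun c => supp K L B (c - x))
      (fun Y => by simpa only [Set.mem_ofPred_eq, and_assoc] using hindep Y) C'

/-- a subspace `Y` is independent in the dual q-matroid `M_C*` iff no codeword
`c ≠ x` has `supp(c−x) ≤ Y`; consequently, circuits of `M_C*` are exactly the supports of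
`x`-minimal codewords. -/
theorem stmt_14 {K L : Type} [Field K] [Fintype K] [Field L] [Fintype L] [Algebra K L]
    {m n : ℕ} (B : Basis (Fin m) K L) (C : Set (Fin n → L)) (hC : AlmostAffine K L C)
    (x : Fin n → L) (hx : x ∈ C) :
    (∀ Y : Submodule K (Fin n → K),
      (finrank K Y + rho K L C (stdPerp K Y) - rho K L C ⊤ = finrank K Y) ↔
        ¬ ∃ c ∈ C, c ≠ x ∧ supp K L B (c - x) ≤ Y) ∧
    (∀ C' : Submodule K (Fin n → K),
      ((¬ (finrank K C' + rho K L C (stdPerp K C') - rho K L C ⊤ = finrank K C')) ∧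
        ∀ Y : Submodule K (Fin n → K), Y < C' →
          finrank K Y + rho K L C (stdPerp K Y) - rho K L C ⊤ = finrank K Y) ↔
        ∃ c ∈ C, c ≠ x ∧
          (¬ ∃ c' ∈ C, c' ≠ x ∧ supp K L B (c' - x) < supp K L B (c - x)) ∧
          supp K L B (c - x) = C') :=
  stmt_14_general B C hC x hx
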